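/- Let n, m be nonnegative integers and k, k1, k2 integers with k1 <= k <= k2 and [k1, k2] contained in [-n, n]. Let X ~ B(n+k, 1/2) and Y ~ B(n-k, 1/2) be independent. Then P[X - Y in [k1, k2]] = 1 - f_n(k - k1 + 1) - f_n(k2 - k + 1), where f_n(t) = P[B(2n, 1/2) >= n + t]. -/

import Mathlib

open MeasureTheory ProbabilityTheory Finset

/-- `X` has the binomial distribution `B(n, 1/2)`. -/
def IsBinomialHalf {Ω : Type*} [MeasurableSpace Ω] (μ : Measure Ω)
    (X : Ω → ℕ) (n : ℕ) : Prop :=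
  ∀ k : ℕ, μ {ω | X ω = k} = (n.choose k : ENNReal) / 2 ^ n

/-- `P[B(2n, 1/2) ≥ n + t]`, the upper tail of the binomial distribution `B(2n, 1/2)`. -/
noncomputable def binomTail (n : ℕ) (t : ℤ) : ℝ :=
  ∑ k ∈ Finset.range (2 * n + 1),
    if (n : ℤ) + t ≤ (k : ℤ) then ((2 * n).choose k : ℝ) / 2 ^ (2 * n) else 0

lemma binom_tail_null {Ω : Type*} [MeasurableSpace Ω] (μ : Measure Ω)
    (X : Ω → ℕ) (a : ℕ) (hXb : IsBinomialHalf μ X a) : μ {ω | a < X ω} = 0 := by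
  have hsub : {ω | a < X ω} ⊆ ⋃ m : ℕ, {ω | X ω = a + 1 + m} := by
    intro ω hω
    exact Set.mem_iUnion.2 ⟨X ω - (a + 1), by simp only [Set.mem_setOf_eq] at hω ⊢; omega⟩
  refine measure_mono_null hsub (measure_iUnion_null fun m => ?_)
  rw [hXb]
  simp [Nat.choose_eq_zero_of_lt (by omega : a < a + 1 + m)]

lemma choose_prod_filter_sum (a b m : ℕ) :
    ∑ p ∈ (range (a+1) ×ˢ range (b+1)).filter (fun p => p.1 + p.2 = m),
      a.choose p.1 * b.choose p.2 = (a + b).choose m := by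
  rw [Nat.add_choose_eq]
  apply Finset.sum_subset
  · intro p hp
    simp only [mem_filter, mem_product, mem_range] at hp
    simpa [Finset.mem_antidiagonal] using hp.2
  · intro p hp hnp
    simp only [Finset.HasAntidiagonal.mem_antidiagonal] at hp
    rcases Nat.lt_or_ge a p.1 with h | h
    · simp [Nat.choose_eq_zero_of_lt h]
    · have h2 : b < p.2 := by
        by_contra h2
        push_neg at h2
        exact hnp (mem_filter.2 ⟨mem_product.2 ⟨mem_range.2 (by omega), mem_range.2 (by omega)⟩, hp⟩)
      simp [Nat.choose_eq_zero_of_lt h2]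

/-- **Two-sided interval probability for a difference of independent binomials.**
If `X ~ B(n+k, 1/2)` and `Y ~ B(n-k, 1/2)` are independent, `k₁ ≤ k ≤ k₂` and
`[k₁, k₂] ⊆ [-n, n]`, then
`P[X - Y ∈ [k₁, k₂]] = 1 - f_n(k - k₁ + 1) - f_n(k₂ - k + 1)`
where `f_n(t) = P[B(2n,1/2) ≥ n + t]`. -/
theorem binomial_diff_interval {Ω : Type*} [MeasurableSpace Ω] (μ : Measure Ω)
    [IsProbabilityMeasure μ] (n : ℕ) (k k₁ k₂ : ℤ)
    (hk1 : k₁ ≤ k) (hk2 : k ≤ k₂) (hlow : -(n : ℤ) ≤ k₁) (hhigh : k₂ ≤ (n : ℤ))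
    (X Y : Ω → ℕ) (hX : Measurable X) (hY : Measurable Y)
    (hXb : IsBinomialHalf μ X ((n : ℤ) + k).toNat)
    (hYb : IsBinomialHalf μ Y ((n : ℤ) - k).toNat)
    (hind : IndepFun X Y μ) :
    (μ {ω | k₁ ≤ (X ω : ℤ) - (Y ω : ℤ) ∧ (X ω : ℤ) - (Y ω : ℤ) ≤ k₂}).toReal
      = 1 - binomTail n (k - k₁ + 1) - binomTail n (k₂ - k + 1) := by
  set a := ((n : ℤ) + k).toNat with haa
  set b := ((n : ℤ) - k).toNat with hbb
  have ha : (a : ℤ) = (n : ℤ) + k := Int.toNat_of_nonneg (by omega)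
  have hb : (b : ℤ) = (n : ℤ) - k := Int.toNat_of_nonneg (by omega)
  have hab : a + b = 2 * n := by omega
  have hXnull : μ {ω | a < X ω} = 0 := binom_tail_null μ X a hXb
  have hYnull : μ {ω | b < Y ω} = 0 := binom_tail_null μ Y b hYb
  set T : Finset (ℕ × ℕ) := (range (a+1) ×ˢ range (b+1)).filter
    (fun p => k₁ ≤ (p.1 : ℤ) - (p.2 : ℤ) ∧ (p.1 : ℤ) - (p.2 : ℤ) ≤ k₂) with hT
  set S : ℕ × ℕ → Set Ω := fun p => X ⁻¹' {p.1} ∩ Y ⁻¹' {p.2} with hS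
  have hmeas : ∀ p ∈ T, MeasurableSet (S p) := fun p _ =>
    (hX (measurableSet_singleton _)).inter (hY (measurableSet_singleton _))
  have hE : μ {ω | k₁ ≤ (X ω : ℤ) - (Y ω : ℤ) ∧ (X ω : ℤ) - (Y ω : ℤ) ≤ k₂}
      = ∑ p ∈ T, μ (S p) := by
    have hdisj : (T : Set (ℕ × ℕ)).PairwiseDisjoint S := by
      intro p _ q _ hpq
      simp only [Function.onFun]
      rw [Set.disjoint_left]
      rintro ω ⟨hx1, hy1⟩ ⟨hx2, hy2⟩
      simp only [hS, Set.mem_preimage, Set.mem_singleton_iff] at hx1 hy1 hx2 hy2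
      exact hpq (Prod.ext (hx1 ▸ hx2.symm ▸ rfl) (hy1 ▸ hy2.symm ▸ rfl))
    rw [← measure_biUnion_finset hdisj hmeas]
    apply le_antisymm
    · have hsub : {ω | k₁ ≤ (X ω : ℤ) - (Y ω : ℤ) ∧ (X ω : ℤ) - (Y ω : ℤ) ≤ k₂}
          ⊆ (⋃ p ∈ T, S p) ∪ ({ω | a < X ω} ∪ {ω | b < Y ω}) := by
        intro ω hω
        simp only [Set.mem_setOf_eq] at hω
        by_cases hx : X ω ≤ a
        · by_cases hy : Y ω ≤ b
          · left
            simp only [Set.mem_iUnion]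
            refine ⟨(X ω, Y ω), ?_, by simp [hS]⟩
            simp only [hT, mem_filter, mem_product, mem_range]
            exact ⟨⟨by omega, by omega⟩, hω⟩
          · right; right; simp only [Set.mem_setOf_eq] ; omega
        · right; left; simp only [Set.mem_setOf_eq]; omega
      calc μ _ ≤ μ ((⋃ p ∈ T, S p) ∪ ({ω | a < X ω} ∪ {ω | b < Y ω})) := measure_mono hsub
        _ ≤ μ (⋃ p ∈ T, S p) + μ ({ω | a < X ω} ∪ {ω | b < Y ω}) := measure_union_le _ _
        _ = μ (⋃ p ∈ T, S p) := by
            rw [measure_union_null hXnull hYnull, add_zero]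
    · apply measure_mono
      intro ω hω
      simp only [Set.mem_iUnion] at hω
      obtain ⟨p, hp, hωp⟩ := hω
      simp only [hT, mem_filter, mem_product, mem_range] at hp
      simp only [hS, Set.mem_preimage, Set.mem_singleton_iff] at hωp
      simp only [Set.mem_setOf_eq]
      rw [hωp.1, hωp.2]
      exact hp.2
  have hterm : ∀ p ∈ T, μ (S p)
      = ((a.choose p.1 : ENNReal) / 2 ^ a) * ((b.choose p.2 : ENNReal) / 2 ^ b) := by
    intro p _
    rw [hS]
    rw [hind.measure_inter_preimage_eq_mul _ _ (measurableSet_singleton _)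
      (measurableSet_singleton _)]
    have h1 : X ⁻¹' {p.1} = {ω | X ω = p.1} := rfl
    have h2 : Y ⁻¹' {p.2} = {ω | Y ω = p.2} := rfl
    rw [h1, h2, hXb p.1, hYb p.2]
  rw [hE, Finset.sum_congr rfl hterm]
  rw [ENNReal.toReal_sum (fun p _ => by
    apply ENNReal.mul_ne_top <;>
      exact (ENNReal.div_lt_top (ENNReal.natCast_ne_top _) (by positivity)).ne)]
  have hterm2 : ∀ p ∈ T,
      (((a.choose p.1 : ENNReal) / 2 ^ a) * ((b.choose p.2 : ENNReal) / 2 ^ b)).toReal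
        = ((a.choose p.1 * b.choose p.2 : ℕ) : ℝ) / 2 ^ (2 * n) := by
    intro p _
    rw [ENNReal.toReal_mul, ENNReal.toReal_div, ENNReal.toReal_div]
    simp only [ENNReal.toReal_natCast, ENNReal.toReal_pow, ENNReal.toReal_ofNat]
    rw [← hab, pow_add]
    push_cast
    field_simp
  rw [Finset.sum_congr rfl hterm2]
  have key : ∑ p ∈ T, ((a.choose p.1 * b.choose p.2 : ℕ) : ℝ) / 2 ^ (2*n)
      = ∑ m ∈ range (2*n+1),
          if (n:ℤ) - k + k₁ ≤ (m:ℤ) ∧ (m:ℤ) ≤ (n:ℤ) - k + k₂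
          then ((2*n).choose m : ℝ) / 2 ^ (2*n) else 0 := by
    rw [hT, Finset.sum_filter]
    have step1 : ∑ p ∈ range (a+1) ×ˢ range (b+1),
        (if k₁ ≤ (p.1:ℤ) - (p.2:ℤ) ∧ (p.1:ℤ) - (p.2:ℤ) ≤ k₂
         then ((a.choose p.1 * b.choose p.2 : ℕ) : ℝ) / 2 ^ (2*n) else 0)
        = ∑ p ∈ range (a+1) ×ˢ range (b+1),
        (if (n:ℤ) - k + k₁ ≤ (p.1:ℤ) + (p.2:ℤ) ∧ (p.1:ℤ) + (p.2:ℤ) ≤ (n:ℤ) - k + k₂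
         then ((a.choose p.1 * b.choose p.2 : ℕ) : ℝ) / 2 ^ (2*n) else 0) := by
      refine Finset.sum_bij' (fun p _ => (p.1, b - p.2)) (fun p _ => (p.1, b - p.2))
        ?_ ?_ ?_ ?_ ?_
      · intro p hp
        simp only [mem_product, mem_range] at hp ⊢
        omega
      · intro p hp
        simp only [mem_product, mem_range] at hp ⊢
        omega
      · intro p hp
        simp only [mem_product, mem_range] at hp
        have h2 : b - (b - p.2) = p.2 := by omega
        simp [h2]
      · intro p hp
        simp only [mem_product, mem_range] at hp
        have h2 : b - (b - p.2) = p.2 := by omega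
        simp [h2]
      · intro p hp
        simp only [mem_product, mem_range] at hp
        dsimp only
        rw [Nat.choose_symm (by omega : p.2 ≤ b)]
        exact if_congr (by omega) rfl rfl
    rw [step1, ← Finset.sum_fiberwise_of_maps_to (g := fun p : ℕ × ℕ => p.1 + p.2)
      (t := range (2*n+1)) (fun p hp => by
        simp only [mem_product, mem_range] at hp ⊢; omega)]
    refine Finset.sum_congr rfl fun m hm => ?_
    have hinner : ∀ p ∈ (range (a+1) ×ˢ range (b+1)).filter (fun p => p.1 + p.2 = m),
        (if (n:ℤ) - k + k₁ ≤ (p.1:ℤ) + (p.2:ℤ) ∧ (p.1:ℤ) + (p.2:ℤ) ≤ (n:ℤ) - k + k₂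
         then ((a.choose p.1 * b.choose p.2 : ℕ) : ℝ) / 2 ^ (2*n) else 0)
        = (if (n:ℤ) - k + k₁ ≤ (m:ℤ) ∧ (m:ℤ) ≤ (n:ℤ) - k + k₂
           then ((a.choose p.1 * b.choose p.2 : ℕ) : ℝ) / 2 ^ (2*n) else 0) := by
      intro p hp
      simp only [mem_filter] at hp
      have hpm : (p.1:ℤ) + (p.2:ℤ) = (m:ℤ) := by omega
      rw [hpm]
    rw [Finset.sum_congr rfl hinner]
    split_ifs with hcond
    · rw [← Finset.sum_div, ← Nat.cast_sum, choose_prod_filter_sum, hab]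
    · simp
  have h2t : binomTail n (k - k₁ + 1)
      = ∑ m ∈ range (2*n+1), if (m:ℤ) ≤ (n:ℤ) - k + k₁ - 1
          then ((2*n).choose m : ℝ) / 2 ^ (2*n) else 0 := by
    rw [binomTail, ← Finset.sum_range_reflect]
    refine Finset.sum_congr rfl fun j hj => ?_
    simp only [mem_range] at hj
    have hj' : j ≤ 2*n := by omega
    have hr : 2*n + 1 - 1 - j = 2*n - j := by omega
    rw [hr, Nat.choose_symm hj']
    exact if_congr (by omega) rfl rfl
  have h1 : (1:ℝ) = ∑ m ∈ range (2*n+1), ((2*n).choose m : ℝ) / 2 ^ (2*n) := by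
    rw [← Finset.sum_div, ← Nat.cast_sum, Nat.sum_range_choose, Nat.cast_pow]
    norm_num
  rw [key, h2t]
  simp only [binomTail]
  conv_rhs => rw [h1]
  rw [← Finset.sum_sub_distrib, ← Finset.sum_sub_distrib]
  refine Finset.sum_congr rfl fun m hm => ?_
  simp only [mem_range] at hm
  split_ifs <;> first | (exfalso; omega) | ring
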